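/- arXiv:1712.08480 — 4 statements merged into one kernel-verified Lean document; each statement's English description precedes it below -/
import Mathlib

section
/- Let f be a real-valued function on the Hermitian matrices in ℂ^{d×d} that is continuous on the set of density matrices, with f* := inf{ f(ρ) : ρ a density matrix } > −∞. For λ > 0 set f_λ* := inf{ f(ρ) − λ·Real.log(det ρ) : ρ a non-singular density matrix } (for positive definite ρ, det ρ is a positive real number). Then f_λ* converges to f* as λ → 0 from the right; equivalently, inf_{λ>0} f_λ* = f*. -/
open Matrix Filter
open scoped ComplexOrder Topology

variable {d : ℕ}

/-- A density matrix: Hermitian positive semidefinite with unit trace. -/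
def IsDensity (ρ : Matrix (Fin d) (Fin d) ℂ) : Prop :=
  ρ.PosSemidef ∧ ρ.trace = 1

/-- A non-singular density matrix: positive definite with unit trace. -/
def IsNSDensity (ρ : Matrix (Fin d) (Fin d) ℂ) : Prop :=
  ρ.PosDef ∧ ρ.trace = 1

/-- Matrix logarithm via the spectral decomposition (junk value `0` if not Hermitian). -/
noncomputable def matLog (ρ : Matrix (Fin d) (Fin d) ℂ) : Matrix (Fin d) (Fin d) ℂ :=
  if h : ρ.IsHermitian then h.cfc Real.log else 0

/-- Real trace inner product of two (Hermitian) matrices: `Re tr (A B)`. -/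
noncomputable def hinner (A B : Matrix (Fin d) (Fin d) ℂ) : ℝ :=
  ((A * B).trace).re

/-- Quantum relative entropy `D(ρ,σ) = tr(ρ log ρ) − tr(ρ log σ) − tr(ρ − σ)`. -/
noncomputable def qRelEnt (ρ σ : Matrix (Fin d) (Fin d) ℂ) : ℝ :=
  ((ρ * matLog ρ).trace - (ρ * matLog σ).trace - (ρ - σ).trace).re

/-- The exponentiated-gradient (EG) update
`ρ(α) = exp(log ρ − α G) / tr exp(log ρ − α G)`. -/
noncomputable def egUpdate (ρ G : Matrix (Fin d) (Fin d) ℂ) (α : ℝ) :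
    Matrix (Fin d) (Fin d) ℂ :=
  ((NormedSpace.exp (matLog ρ - α • G)).trace)⁻¹ • NormedSpace.exp (matLog ρ - α • G)

/-- `f` has Hermitian gradient `g` at `ρ`: the derivative of `f` at `ρ` in any
Hermitian direction `X` equals `tr (g X)`. -/
def HasHermGradAt (f : Matrix (Fin d) (Fin d) ℂ → ℝ) (g ρ : Matrix (Fin d) (Fin d) ℂ) : Prop :=
  g.IsHermitian ∧ ∀ X : Matrix (Fin d) (Fin d) ℂ, X.IsHermitian →
    HasDerivAt (fun t : ℝ => f (ρ + t • X)) (hinner g X) 0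

/-- Largest eigenvalue of a Hermitian matrix (junk value if not Hermitian). -/
noncomputable def lamMax (G : Matrix (Fin d) (Fin d) ℂ) : ℝ :=
  if h : G.IsHermitian then ⨆ i, h.eigenvalues i else 0

/-- Smallest eigenvalue of a Hermitian matrix (junk value if not Hermitian). -/
noncomputable def lamMin (G : Matrix (Fin d) (Fin d) ℂ) : ℝ :=
  if h : G.IsHermitian then ⨅ i, h.eigenvalues i else 0

/-- The Armijo condition at `ρ` with step `a`, for objective `f` with gradient map `gradf`
and parameter `τ`. -/
def armijoCond (f : Matrix (Fin d) (Fin d) ℂ → ℝ)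
    (gradf : Matrix (Fin d) (Fin d) ℂ → Matrix (Fin d) (Fin d) ℂ)
    (τ : ℝ) (ρ : Matrix (Fin d) (Fin d) ℂ) (a : ℝ) : Prop :=
  f (egUpdate ρ (gradf ρ) a) ≤ f ρ + τ * hinner (gradf ρ) (egUpdate ρ (gradf ρ) a - ρ)

/-!
A density matrix has its eigenvalues in `[0, 1]`, so `log det ρ ≤ 0` and every regularized value
is at least `f*`. Conversely, mixing in the maximally mixed state shows that non-singular density
matrices are dense among density matrices, so by continuity some non-singular `σ` has
`f σ < f* + ε`; the regularized value is at most `f σ - λ log det σ`, which tends to `f σ`.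
-/

section PenalizedInfimum

variable {α : Type*} {f g : α → ℝ} {s t : Set α} {m : ℝ}

lemma mem_lowerBounds_image_sub_mul (hlow : ∀ x ∈ s, m ≤ f x) (hg : ∀ x ∈ s, g x ≤ 0)
    {lam : ℝ} (hlam : 0 ≤ lam) : m ∈ lowerBounds ((fun x => f x - lam * g x) '' s) := by
  rintro _ ⟨x, hx, rfl⟩
  nlinarith [hlow x hx, hg x hx]

lemma sInf_image_le_sInf_image_sub_mul (hst : s ⊆ t) (hs : s.Nonempty)
    (hbdd : BddBelow (f '' t)) (hg : ∀ x ∈ s, g x ≤ 0) {lam : ℝ} (hlam : 0 ≤ lam) :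
    sInf (f '' t) ≤ sInf ((fun x => f x - lam * g x) '' s) :=
  le_csInf (hs.image _)
    (mem_lowerBounds_image_sub_mul (fun x hx => csInf_le hbdd ⟨x, hst hx, rfl⟩) hg hlam)

variable [TopologicalSpace α]

lemma isGLB_image_of_subset_closure (hst : s ⊆ t) (hts : t ⊆ closure s) (ht : t.Nonempty)
    (hf : ContinuousOn f t) (hbdd : BddBelow (f '' t)) : IsGLB (f '' s) (sInf (f '' t)) := by
  refine (isGLB_iff_of_subset_of_subset_closure (Set.image_mono hst) ?_).2
    (isGLB_csInf (ht.image f) hbdd)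
  rintro _ ⟨x, hx, rfl⟩
  exact ((hf x hx).mono hst).mem_closure_image (hts hx)

lemma tendsto_sInf_image_sub_mul (hst : s ⊆ t) (hts : t ⊆ closure s) (hs : s.Nonempty)
    (hf : ContinuousOn f t) (hbdd : BddBelow (f '' t)) (hg : ∀ x ∈ s, g x ≤ 0) :
    Tendsto (fun lam => sInf ((fun x => f x - lam * g x) '' s)) (𝓝[>] 0)
      (𝓝 (sInf (f '' t))) := by
  have hglb := isGLB_image_of_subset_closure hst hts (hs.mono hst) hf hbdd
  have hbound : ∀ lam : ℝ, 0 < lam →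
      sInf (f '' t) ∈ lowerBounds ((fun x => f x - lam * g x) '' s) := fun lam hlam =>
    mem_lowerBounds_image_sub_mul (fun x hx => hglb.1 ⟨x, hx, rfl⟩) hg hlam.le
  refine tendsto_order.2 ⟨fun a ha => ?_, fun a ha => ?_⟩
  · filter_upwards [self_mem_nhdsWithin] with lam hlam
    exact ha.trans_le (sInf_image_le_sInf_image_sub_mul hst hs hbdd hg (le_of_lt hlam))
  · obtain ⟨_, ⟨x, hx, rfl⟩, -, hxa⟩ := hglb.exists_between ha
    have hpen : ∀ᶠ lam in 𝓝 (0 : ℝ), f x - lam * g x < a :=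
      (Continuous.tendsto (by fun_prop) 0).eventually_lt_const (by simpa using hxa)
    filter_upwards [nhdsWithin_le_nhds hpen, self_mem_nhdsWithin] with lam hlam hpos
    exact (csInf_le ⟨_, hbound lam hpos⟩ ⟨x, hx, rfl⟩).trans_lt hlam

end PenalizedInfimum

lemma iInf_pos_eq_of_tendsto_nhdsGT {F : ℝ → ℝ} {L : ℝ} (hF : Tendsto F (𝓝[>] 0) (𝓝 L))
    (hL : ∀ lam, 0 < lam → L ≤ F lam) : ⨅ lam : {x : ℝ // 0 < x}, F lam = L := by
  have : Nonempty {x : ℝ // 0 < x} := ⟨⟨1, one_pos⟩⟩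
  refine le_antisymm ?_ (le_ciInf fun lam => hL lam lam.2)
  refine ge_of_tendsto hF ?_
  have hbdd : BddBelow (Set.range fun c : {x : ℝ // 0 < x} => F c) :=
    ⟨L, by rintro _ ⟨c, rfl⟩; exact hL c c.2⟩
  filter_upwards [self_mem_nhdsWithin] with lam hlam
  exact ciInf_le hbdd ⟨lam, hlam⟩

namespace IsDensity

variable {ρ σ : Matrix (Fin d) (Fin d) ℂ}

lemma det_re_mem_Icc (hρ : IsDensity ρ) : ρ.det.re ∈ Set.Icc 0 1 := by
  have hA := hρ.1.isHermitian
  have hdet : ρ.det.re = ∏ i, hA.eigenvalues i := by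
    rw [hA.det_eq_prod_eigenvalues]; norm_cast
  have hsum : ∑ i, hA.eigenvalues i = 1 := by
    have h := hA.trace_eq_sum_eigenvalues
    rw [hρ.2] at h
    exact_mod_cast (h.trans (Complex.ofReal_sum _ _).symm).symm
  have hnonneg : ∀ i, 0 ≤ hA.eigenvalues i := hρ.1.eigenvalues_nonneg
  rw [hdet]
  refine ⟨Finset.prod_nonneg fun i _ => hnonneg i, Finset.prod_le_one (fun i _ => hnonneg i)
    fun i _ => ?_⟩
  exact hsum ▸ Finset.single_le_sum (fun j _ => hnonneg j) (Finset.mem_univ i)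

lemma log_det_re_nonpos (hρ : IsDensity ρ) : Real.log ρ.det.re ≤ 0 :=
  Real.log_nonpos hρ.det_re_mem_Icc.1 hρ.det_re_mem_Icc.2

lemma isNSDensity_smul_add_smul (hρ : IsDensity ρ) (hσ : IsNSDensity σ) {t : ℝ} (ht₀ : 0 < t)
    (ht₁ : t ≤ 1) : IsNSDensity ((1 - t) • ρ + t • σ) := by
  refine ⟨PosDef.posSemidef_add (hρ.1.smul (sub_nonneg.2 ht₁)) (hσ.1.smul ht₀), ?_⟩
  simp [trace_add, trace_smul, hρ.2, hσ.2]

lemma mem_closure_isNSDensity (hρ : IsDensity ρ) (hσ : IsNSDensity σ) :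
    ρ ∈ closure {σ : Matrix (Fin d) (Fin d) ℂ | IsNSDensity σ} := by
  have hpath : Tendsto (fun t : ℝ => (1 - t) • ρ + t • σ) (𝓝[>] 0) (𝓝 ρ) := by
    have hcont : Continuous fun t : ℝ => (1 - t) • ρ + t • σ := by fun_prop
    simpa using (hcont.tendsto 0).mono_left nhdsWithin_le_nhds
  refine mem_closure_of_tendsto hpath ?_
  filter_upwards [Ioc_mem_nhdsGT zero_lt_one] with t ht
  exact hρ.isNSDensity_smul_add_smul hσ ht.1 ht.2

end IsDensity

lemma IsNSDensity.isDensity {σ : Matrix (Fin d) (Fin d) ℂ} (hσ : IsNSDensity σ) :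
    IsDensity σ :=
  ⟨hσ.1.posSemidef, hσ.2⟩

lemma isNSDensity_maximallyMixed (d : ℕ) [NeZero d] :
    IsNSDensity ((d : ℝ)⁻¹ • (1 : Matrix (Fin d) (Fin d) ℂ)) := by
  refine ⟨PosDef.one.smul (by simp [Nat.pos_of_neZero]), ?_⟩
  simp [trace_smul]

/-- The optimal value of the log-det–regularized problem converges to the optimal value of
the original problem as the regularization parameter `λ ↓ 0`; equivalently the infimum over
`λ > 0` of the regularized optimal values equals `f*`. -/
theorem logdet_regularized_value_tendsto [NeZero d]
    (f : Matrix (Fin d) (Fin d) ℂ → ℝ)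
    (hcont : ContinuousOn f {σ : Matrix (Fin d) (Fin d) ℂ | IsDensity σ})
    (hbdd : BddBelow (f '' {σ : Matrix (Fin d) (Fin d) ℂ | IsDensity σ})) :
    Tendsto
      (fun lam : ℝ =>
        sInf ((fun σ => f σ - lam * Real.log σ.det.re) ''
          {σ : Matrix (Fin d) (Fin d) ℂ | IsNSDensity σ}))
      (nhdsWithin 0 (Set.Ioi 0))
      (𝓝 (sInf (f '' {σ : Matrix (Fin d) (Fin d) ℂ | IsDensity σ}))) ∧
    (⨅ lam : {x : ℝ // 0 < x},
        sInf ((fun σ => f σ - (lam : ℝ) * Real.log σ.det.re) ''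
          {σ : Matrix (Fin d) (Fin d) ℂ | IsNSDensity σ})) =
      sInf (f '' {σ : Matrix (Fin d) (Fin d) ℂ | IsDensity σ}) := by
  have hμ := isNSDensity_maximallyMixed d
  have hsub : {σ : Matrix (Fin d) (Fin d) ℂ | IsNSDensity σ} ⊆ {σ | IsDensity σ} :=
    fun σ hσ => hσ.isDensity
  have hlog : ∀ σ ∈ {σ : Matrix (Fin d) (Fin d) ℂ | IsNSDensity σ}, Real.log σ.det.re ≤ 0 :=
    fun σ hσ => hσ.isDensity.log_det_re_nonpos
  have hlim := tendsto_sInf_image_sub_mul hsub (fun ρ hρ => hρ.mem_closure_isNSDensity hμ)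
    ⟨_, hμ⟩ hcont hbdd hlog
  exact ⟨hlim, iInf_pos_eq_of_tendsto_nhdsGT hlim fun lam hlam =>
    sInf_image_le_sInf_image_sub_mul hsub ⟨_, hμ⟩ hbdd hlog hlam.le⟩
end

section
/- For every L > 0, the function t ↦ L·(t·Real.log t + (1−t)·Real.log(1−t) − 1) + Real.log t + Real.log(1−t) is not convex on the open interval (0,1). Equivalently, the quantum state tomography loss restricted to diagonal 2×2 density matrices, g(t) = −log t − log(1−t), is not L-smooth relative to the negative entropy h(t) = t log t + (1−t) log(1−t) − 1 for any L > 0: L·h − g is never convex. -/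
/-!
On `(0, 1)` the negative entropy `h` stays bounded near `0` while `log t → -∞`, so
`L·h + log t + log (1 - t) → -∞` as `t → 0⁺`. A convex function on an open
interval cannot do this: by monotonicity of slopes it lies above a secant line, hence is
bounded below near each endpoint.
-/

open Filter Topology Set

theorem ConvexOn.not_tendsto_atBot_nhdsGT {𝕜 : Type*} [Field 𝕜] [LinearOrder 𝕜]
    [IsStrictOrderedRing 𝕜] [TopologicalSpace 𝕜] [OrderTopology 𝕜] {a b : 𝕜} {f : 𝕜 → 𝕜}
    (hab : a < b) (hf : ConvexOn 𝕜 (Ioo a b) f) : ¬ Tendsto f (𝓝[>] a) atBot := by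
  intro hbot
  obtain ⟨p, hap, hpb⟩ := exists_between hab
  obtain ⟨q, hpq, hqb⟩ := exists_between hpb
  set s := (f q - f p) / (q - p)
  have hbound : ∀ x ∈ Ioo a p, f p - |s| * (p - a) ≤ f x := by
    rintro x ⟨hax, hxp⟩
    have hslope := hf.slope_mono_adjacent ⟨hax, hxp.trans hpb⟩ ⟨hap.trans hpq, hqb⟩ hxp hpq
    rw [div_le_iff₀ (sub_pos.2 hxp)] at hslope
    nlinarith [mul_le_mul_of_nonneg_right (le_abs_self s) (sub_pos.2 hxp).le,
      mul_le_mul_of_nonneg_left (sub_le_sub_left hax.le p) (abs_nonneg s)]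
  obtain ⟨x, hx, hlt⟩ := (Filter.Eventually.and (Ioo_mem_nhdsGT hap)
    (hbot.eventually_lt_atBot (f p - |s| * (p - a)))).exists
  exact (hbound x hx).not_gt hlt

theorem tendsto_negEntropy_nhdsGT_zero :
    Tendsto (fun t : ℝ => t * Real.log t + (1 - t) * Real.log (1 - t) - 1) (𝓝[>] 0)
      (𝓝 (-1)) := by
  have hcont : Continuous fun t : ℝ => t * Real.log t + (1 - t) * Real.log (1 - t) - 1 := by
    have := Real.continuous_mul_log
    fun_prop
  simpa using hcont.continuousWithinAt.tendsto (x := 0) (s := Ioi 0)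

theorem tendsto_log_one_sub_nhdsGT_zero :
    Tendsto (fun t : ℝ => Real.log (1 - t)) (𝓝[>] 0) (𝓝 0) := by
  have hcont : ContinuousAt (fun t : ℝ => Real.log (1 - t)) 0 :=
    (continuous_const.sub continuous_id).continuousAt.log (by norm_num)
  simpa using hcont.tendsto.mono_left nhdsWithin_le_nhds

/-- For every `L > 0`, the function `t ↦ L·(t log t + (1−t) log(1−t) − 1) + log t + log(1−t)`
(i.e. `L·h − g` where `g(t) = −log t − log(1−t)` is the two-dimensional quantum state
tomography loss and `h` the negative entropy) is not convex on `(0,1)`: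
`g` is not `L`-smooth relative to `h` for any `L > 0`. -/
theorem qst_not_relatively_smooth :
    ∀ L > (0 : ℝ),
      ¬ ConvexOn ℝ (Set.Ioo (0 : ℝ) 1)
        (fun t : ℝ =>
          L * (t * Real.log t + (1 - t) * Real.log (1 - t) - 1) +
            Real.log t + Real.log (1 - t)) := by
  intro L _ hconv
  have htendsto := ((tendsto_negEntropy_nhdsGT_zero.const_mul L).add_atBot
    Real.tendsto_log_nhdsGT_zero).atBot_add tendsto_log_one_sub_nhdsGT_zero
  exact hconv.not_tendsto_atBot_nhdsGT zero_lt_one htendsto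
end

section
/- Let ρ be a non-singular density matrix, G a Hermitian matrix, and define φ(α) := Real.log( tr( exp(log ρ − α·G) ) ) for α ∈ ℝ. Then φ is differentiable and for every α > 0, D(ρ(α), ρ) = φ(0) − φ(α) + α·φ'(α), where ρ(α) is the EG update at ρ with matrix G and step α and φ' denotes the derivative of φ. (Here φ(0) = 0 since tr ρ = 1.) -/
open Matrix Filter
open scoped ComplexOrder Topology

variable {d : ℕ}

/-! The EG update is the Gibbs state `Z⁻¹ exp H` of `H = log ρ − αG`, where
`Z = tr exp H = e^{φ(α)}`, so its logarithm is `H − φ(α)`. Hence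
`D(ρ(α), ρ) = tr(ρ(α) (H − log ρ)) − φ(α) = −α tr(ρ(α) G) − φ(α)`, while `φ(0) = log tr ρ = 0`
and `φ'(α) = −tr(ρ(α) G)`. The derivative comes from `d/dt tr exp(A + tB) = tr(exp(A + tB) B)`,
obtained by differentiating the exponential series termwise: cyclicity of the trace collapses
the `n` terms of the derivative of `(A + tB)ⁿ`. -/

section TracialExp

open NormedSpace Finset
open scoped Nat

variable {𝔸 E : Type*} [NormedRing 𝔸] [NormedAlgebra ℝ 𝔸] [NormedAddCommGroup E] [NormedSpace ℝ E]
  {τ : 𝔸 →L[ℝ] E}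

theorem hasDerivAt_apply_pow_of_cyclic (hτ : ∀ x y, τ (x * y) = τ (y * x)) {f : ℝ → 𝔸} {f' : 𝔸}
    {t : ℝ} (hf : HasDerivAt f f' t) (n : ℕ) :
    HasDerivAt (fun s => τ (f s ^ n)) ((n : ℝ) • τ (f t ^ (n - 1) * f')) t := by
  refine (τ.hasFDerivAt.comp_hasDerivAt t (hf.fun_pow' n)).congr_deriv ?_
  have hterm : ∀ i ∈ range n, τ (f t ^ (n.pred - i) * f' * f t ^ i) = τ (f t ^ (n - 1) * f') := by
    intro i hi
    rw [hτ, ← mul_assoc, ← pow_add, Nat.add_sub_cancel' (Nat.le_pred_of_lt (mem_range.mp hi)),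
      Nat.pred_eq_sub_one]
  rw [map_sum, Finset.sum_congr rfl hterm, sum_const, card_range, Nat.cast_smul_eq_nsmul]

theorem norm_pow_mul_le {R : Type*} [SeminormedRing R] (x y : R) (n : ℕ) :
    ‖x ^ n * y‖ ≤ ‖x‖ ^ n * ‖y‖ := by
  induction n with
  | zero => simp
  | succ n ih =>
    rw [_root_.pow_succ', mul_assoc, _root_.pow_succ', mul_assoc]
    exact (norm_mul_le _ _).trans (mul_le_mul_of_nonneg_left ih (norm_nonneg x))

theorem hasSum_apply_exp [CompleteSpace 𝔸] (L : 𝔸 →L[ℝ] E) (x : 𝔸) :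
    HasSum (fun n => (n !⁻¹ : ℝ) • L (x ^ n)) (L (exp x)) := by
  simpa using (exp_series_hasSum_exp' (𝕂 := ℝ) x).mapL L

theorem hasDerivAt_apply_exp_add_smul [CompleteSpace 𝔸] [CompleteSpace E]
    (hτ : ∀ x y, τ (x * y) = τ (y * x)) (a b : 𝔸) (t₀ : ℝ) :
    HasDerivAt (fun t : ℝ => τ (exp (a + t • b))) (τ (exp (a + t₀ • b) * b)) t₀ := by
  set R := ‖a‖ + (|t₀| + 1) * ‖b‖
  have hcoef (k : ℕ) : ((k + 1)! : ℝ)⁻¹ * (k + 1 : ℕ) = (k ! : ℝ)⁻¹ := by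
    rw [Nat.factorial_succ]; push_cast; field_simp
  set g' : ℕ → ℝ → E := fun n t => (n !⁻¹ : ℝ) • (n : ℝ) • τ ((a + t • b) ^ (n - 1) * b)
  have hline (t : ℝ) : HasDerivAt (fun s : ℝ => a + s • b) b t := by
    simpa using ((hasDerivAt_id t).smul_const b).const_add a
  have hnorm : ∀ t ∈ Metric.ball t₀ 1, ‖a + t • b‖ ≤ R := by
    intro t ht
    have : |t| ≤ |t₀| + 1 := by
      have := abs_sub_abs_le_abs_sub t t₀
      rw [Metric.mem_ball, Real.dist_eq] at ht
      linarith
    calc ‖a + t • b‖ ≤ ‖a‖ + |t| * ‖b‖ :=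
          (norm_add_le _ _).trans (by rw [norm_smul, Real.norm_eq_abs])
      _ ≤ R := by simp only [R]; gcongr
  have hbound :
      ∀ n, ∀ t ∈ Metric.ball t₀ 1, ‖g' n t‖ ≤ ‖τ‖ * ‖b‖ * (R ^ (n - 1) / (n - 1)!) := by
    rintro (_ | k) t ht
    · simp only [g', CharP.cast_eq_zero, zero_smul, smul_zero, norm_zero]
      positivity
    · calc ‖g' (k + 1) t‖ = ‖τ ((a + t • b) ^ k * b)‖ / k ! := by
            simp only [g', smul_smul, norm_smul, hcoef, Nat.add_sub_cancel]
            simp [div_eq_inv_mul]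
        _ ≤ ‖τ‖ * (‖a + t • b‖ ^ k * ‖b‖) / k ! :=
            div_le_div_of_nonneg_right (τ.le_opNorm_of_le (norm_pow_mul_le _ _ _))
              (Nat.cast_nonneg _)
        _ ≤ ‖τ‖ * (R ^ k * ‖b‖) / k ! := by
            gcongr
            exact hnorm t ht
        _ = _ := by simp only [Nat.add_sub_cancel]; ring
  have hsummable : Summable fun n => ‖τ‖ * ‖b‖ * (R ^ (n - 1) / (n - 1)!) := by
    rw [← summable_nat_add_iff 1]
    simpa using (Real.summable_pow_div_factorial R).mul_left (‖τ‖ * ‖b‖)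
  have hderiv := hasDerivAt_tsum_of_isPreconnected hsummable Metric.isOpen_ball
    (convex_ball t₀ 1).isPreconnected
    (fun n t _ => (hasDerivAt_apply_pow_of_cyclic hτ (hline t) n).const_smul (n !⁻¹ : ℝ))
    hbound (Metric.mem_ball_self one_pos) (hasSum_apply_exp τ (a + t₀ • b)).summable
    (Metric.mem_ball_self one_pos)
  have hsum' : HasSum (fun n => g' n t₀) (τ (exp (a + t₀ • b) * b)) := by
    rw [← hasSum_nat_add_iff' 1]
    convert hasSum_apply_exp (τ.comp ((ContinuousLinearMap.mul ℝ 𝔸).flip b)) (a + t₀ • b) using 2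
    · simp only [g', smul_smul, Nat.add_sub_cancel, ContinuousLinearMap.comp_apply,
        ContinuousLinearMap.flip_apply, ContinuousLinearMap.mul_apply', hcoef]
    · simp [g']
  simp only [Pi.smul_apply, fun t => (hasSum_apply_exp τ (a + t • b)).tsum_eq] at hderiv
  exact hderiv.congr_deriv hsum'.tsum_eq

end TracialExp

-- The L² operator norm makes matrices a C⋆-algebra, which gives access to `CFC.log` and its
-- lemmas; its topology is the entrywise one, so `NormedSpace.exp` is the same function.
open scoped Matrix.Norms.L2Operator MatrixOrder

variable {n : Type*} [Fintype n] [DecidableEq n]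

noncomputable def gibbsState (H : Matrix n n ℂ) : Matrix n n ℂ :=
  ((NormedSpace.exp H).trace)⁻¹ • NormedSpace.exp H

noncomputable def logPartition (H : Matrix n n ℂ) : ℝ :=
  Real.log (NormedSpace.exp H).trace.re

namespace Matrix.IsHermitian

variable {H : Matrix n n ℂ}

theorem posDef_exp (hH : H.IsHermitian) : (NormedSpace.exp H).PosDef := by
  rw [← Matrix.isStrictlyPositive_iff_posDef, ← CFC.real_exp_eq_normedSpace_exp hH,
    cfc_isStrictlyPositive_iff Real.exp H]
  exact fun x _ => Real.exp_pos x

variable [Nonempty n]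

theorem re_trace_exp_pos (hH : H.IsHermitian) : 0 < (NormedSpace.exp H).trace.re :=
  (Complex.pos_iff.mp hH.posDef_exp.trace_pos).1

theorem ofReal_re_trace_exp (hH : H.IsHermitian) :
    ((NormedSpace.exp H).trace.re : ℂ) = (NormedSpace.exp H).trace :=
  (Complex.eq_re_of_ofReal_le (r := 0) (by simpa using hH.posDef_exp.trace_pos.le)).symm

theorem gibbsState_eq_smul (hH : H.IsHermitian) :
    gibbsState H = ((NormedSpace.exp H).trace.re)⁻¹ • NormedSpace.exp H := by
  rw [gibbsState]
  nth_rw 1 [← hH.ofReal_re_trace_exp]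
  rw [← Complex.ofReal_inv, Complex.coe_smul]

theorem trace_gibbsState (hH : H.IsHermitian) : (gibbsState H).trace = 1 := by
  rw [gibbsState, trace_smul, smul_eq_mul, inv_mul_cancel₀ hH.posDef_exp.trace_pos.ne']

end Matrix.IsHermitian

theorem matLog_eq_log {A : Matrix (Fin d) (Fin d) ℂ} (hA : A.IsHermitian) :
    matLog A = CFC.log A := by
  rw [matLog, dif_pos hA, CFC.log, hA.cfc_eq]

theorem isHermitian_matLog (A : Matrix (Fin d) (Fin d) ℂ) : (matLog A).IsHermitian := by
  by_cases hA : A.IsHermitian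
  · rw [matLog_eq_log hA]; exact IsSelfAdjoint.log
  · rw [matLog, dif_neg hA]; exact Matrix.isHermitian_zero

theorem Matrix.PosDef.exp_matLog {A : Matrix (Fin d) (Fin d) ℂ} (hA : A.PosDef) :
    NormedSpace.exp (matLog A) = A := by
  rw [matLog_eq_log hA.isHermitian]
  exact CFC.exp_log A hA.isStrictlyPositive

theorem matLog_gibbsState [NeZero d] {H : Matrix (Fin d) (Fin d) ℂ} (hH : H.IsHermitian) :
    matLog (gibbsState H) = H - logPartition H • 1 := by
  have hZ := hH.re_trace_exp_pos
  have hpos : (gibbsState H).PosDef := by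
    rw [hH.gibbsState_eq_smul]; exact hH.posDef_exp.smul (inv_pos.mpr hZ)
  rw [matLog_eq_log hpos.isHermitian, hH.gibbsState_eq_smul,
    CFC.log_smul' _ (inv_pos.mpr hZ) hH.posDef_exp.isStrictlyPositive, CFC.log_exp H hH,
    Real.log_inv, logPartition, Algebra.algebraMap_eq_smul_one, neg_smul]
  abel

theorem qRelEnt_gibbsState [NeZero d] {H ρ : Matrix (Fin d) (Fin d) ℂ} (hH : H.IsHermitian)
    (hρ : ρ.trace = 1) :
    qRelEnt (gibbsState H) ρ = hinner (gibbsState H) (H - matLog ρ) - logPartition H := by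
  rw [qRelEnt, hinner, matLog_gibbsState hH, mul_sub, mul_sub, Matrix.mul_smul, Matrix.mul_one,
    trace_sub, trace_sub, trace_sub, trace_smul, hH.trace_gibbsState, hρ]
  simp only [Complex.sub_re, Complex.real_smul, mul_one, Complex.ofReal_re, sub_self,
    Complex.zero_re]
  ring

theorem hasDerivAt_logPartition_sub_smul [NeZero d] {H G : Matrix (Fin d) (Fin d) ℂ}
    (hH : H.IsHermitian) (hG : G.IsHermitian) (t : ℝ) :
    HasDerivAt (fun a : ℝ => logPartition (H - a • G))
      (-hinner (gibbsState (H - t • G)) G) t := by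
  let τ : Matrix (Fin d) (Fin d) ℂ →L[ℝ] ℝ := Complex.reCLM.comp
    (LinearMap.toContinuousLinearMap ((traceLinearMap (Fin d) ℂ ℂ).restrictScalars ℝ))
  have hτ (x y : Matrix (Fin d) (Fin d) ℂ) : τ (x * y) = τ (y * x) :=
    congrArg Complex.re (trace_mul_comm x y)
  have hHt : (H - t • G).IsHermitian := hH.sub (hG.smul (IsSelfAdjoint.all t))
  have hexp := hasDerivAt_apply_exp_add_smul hτ H (-G) t
  simp only [smul_neg, ← sub_eq_add_neg] at hexp
  refine (hexp.log hHt.re_trace_exp_pos.ne').congr_deriv ?_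
  rw [hHt.gibbsState_eq_smul, hinner, Matrix.smul_mul, trace_smul, Complex.smul_re, smul_eq_mul]
  simp [τ, div_eq_inv_mul]

theorem egUpdate_eq_gibbsState (ρ G : Matrix (Fin d) (Fin d) ℂ) (α : ℝ) :
    egUpdate ρ G α = gibbsState (matLog ρ - α • G) :=
  rfl

theorem eg_divergence_eq_logpartition_general
    (ρ G : Matrix (Fin d) (Fin d) ℂ) (hρ : IsNSDensity ρ) (hG : G.IsHermitian)
    (φ : ℝ → ℝ)
    (hφ : ∀ a : ℝ, φ a = Real.log ((NormedSpace.exp (matLog ρ - a • G)).trace.re)) :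
    (∀ α : ℝ, DifferentiableAt ℝ φ α) ∧
      ∀ α > (0 : ℝ), qRelEnt (egUpdate ρ G α) ρ = φ 0 - φ α + α * deriv φ α := by
  obtain ⟨hρpos, hρtr⟩ := hρ
  have : NeZero d := ⟨by rintro rfl; simp at hρtr⟩
  have hL := isHermitian_matLog ρ
  have hφ' (α : ℝ) : HasDerivAt φ (-hinner (egUpdate ρ G α) G) α := by
    rw [funext hφ]; exact hasDerivAt_logPartition_sub_smul hL hG α
  refine ⟨fun α => (hφ' α).differentiableAt, fun α _ => ?_⟩
  have hφ0 : φ 0 = 0 := by simp [hφ, hρpos.exp_matLog, hρtr]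
  have hinner_neg_smul (σ : Matrix (Fin d) (Fin d) ℂ) :
      hinner σ (-(α • G)) = -(α * hinner σ G) := by
    simp [hinner, trace_smul]
  rw [(hφ' α).deriv, hφ0, hφ α, egUpdate_eq_gibbsState,
    qRelEnt_gibbsState (hL.sub (hG.smul (IsSelfAdjoint.all α))) hρtr, sub_sub_cancel_left,
    hinner_neg_smul, logPartition]
  ring

/-- The relative entropy between the EG update and the current iterate is expressible via the
log-partition function: `D(ρ(α), ρ) = φ(0) − φ(α) + α·φ'(α)`. -/
theorem eg_divergence_eq_logpartition [NeZero d]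
    (ρ G : Matrix (Fin d) (Fin d) ℂ) (hρ : IsNSDensity ρ) (hG : G.IsHermitian)
    (φ : ℝ → ℝ)
    (hφ : ∀ a : ℝ, φ a = Real.log ((NormedSpace.exp (matLog ρ - a • G)).trace.re)) :
    (∀ α : ℝ, DifferentiableAt ℝ φ α) ∧
      ∀ α > (0 : ℝ), qRelEnt (egUpdate ρ G α) ρ = φ 0 - φ α + α * deriv φ α :=
  eg_divergence_eq_logpartition_general ρ G hρ hG φ hφ
end

section
/- Let H and G be Hermitian matrices in ℂ^{d×d} and define φ(α) := Real.log( tr( exp(H + α·G) ) ) for α ∈ ℝ. Then φ is differentiable on ℝ and for every α ∈ ℝ, φ'(α) = tr( G · exp(H + α·G) ) / tr( exp(H + α·G) ) = tr(G·σ_α), where σ_α := exp(H + αG)/tr exp(H + αG) is the Gibbs state. -/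
open Matrix Filter
open scoped ComplexOrder Topology

variable {d : ℕ}

/-
Write `X t = H + t • G`. Differentiating the exponential series term by term, the cyclicity of the
trace collapses the derivative of `tr (X t ^ (n + 1)) / (n + 1)!` to `tr (G * X t ^ n) / n!`, so
`t ↦ Re tr exp (X t)` has derivative `Re tr (G * exp (X t))`; the termwise differentiation is
justified by the bound `‖X t‖ ≤ ‖H‖ + (|t₀| + 1) ‖G‖` near `t₀`. For Hermitian `X t`,
`exp (X t) = Bᴴ * B` with `B = exp (X t / 2)` invertible, so its trace is positive and the chain
rule for `Real.log` applies.
-/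

open NormedSpace

theorem norm_mul_pow_le {R : Type*} [SeminormedRing R] (a b : R) (n : ℕ) :
    ‖a * b ^ n‖ ≤ ‖a‖ * ‖b‖ ^ n := by
  induction n with
  | zero => simp
  | succ n ih =>
    calc ‖a * b ^ (n + 1)‖ ≤ ‖a * b ^ n‖ * ‖b‖ := by
          rw [pow_succ, ← mul_assoc]; exact norm_mul_le _ _
      _ ≤ ‖a‖ * ‖b‖ ^ n * ‖b‖ := by gcongr
      _ = ‖a‖ * ‖b‖ ^ (n + 1) := by ring

theorem norm_add_smul_le_of_mem_ball {E : Type*} [SeminormedAddCommGroup E] [NormedSpace ℝ E]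
    (A B : E) {t t₀ : ℝ} (ht : t ∈ Metric.ball t₀ 1) :
    ‖A + t • B‖ ≤ ‖A‖ + (|t₀| + 1) * ‖B‖ := by
  have : |t| ≤ |t₀| + 1 := by
    have := abs_sub_abs_le_abs_sub t t₀
    rw [Metric.mem_ball, Real.dist_eq] at ht
    linarith
  calc ‖A + t • B‖ ≤ ‖A‖ + |t| * ‖B‖ :=
        (norm_add_le _ _).trans_eq (by rw [norm_smul, Real.norm_eq_abs])
    _ ≤ ‖A‖ + (|t₀| + 1) * ‖B‖ := by gcongr

section Tracial

open Nat

variable {𝔸 : Type*} [NormedRing 𝔸] [NormedAlgebra ℝ 𝔸] {τ : 𝔸 →L[ℝ] ℝ}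

theorem HasDerivAt.tracial_pow (hτ : ∀ a b, τ (a * b) = τ (b * a))
    {f : ℝ → 𝔸} {f' : 𝔸} {t : ℝ} (hf : HasDerivAt f f' t) (n : ℕ) :
    HasDerivAt (fun s => τ (f s ^ n)) (n * τ (f' * f t ^ (n - 1))) t := by
  refine (τ.hasFDerivAt.comp_hasDerivAt t (hf.fun_pow' n)).congr_deriv ?_
  have hterm : ∀ i ∈ Finset.range n,
      τ (f t ^ (n.pred - i) * f' * f t ^ i) = τ (f' * f t ^ (n - 1)) := by
    intro i hi
    rw [mul_assoc, hτ, mul_assoc, ← pow_add, Nat.pred_eq_sub_one,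
      Nat.add_sub_cancel' (Nat.le_sub_one_of_lt (Finset.mem_range.mp hi))]
  rw [map_sum, Finset.sum_congr rfl hterm, Finset.sum_const, Finset.card_range, nsmul_eq_mul]

variable [CompleteSpace 𝔸]

theorem hasSum_exp_series_apply (ℓ : 𝔸 →L[ℝ] ℝ) (x : 𝔸) :
    HasSum (fun n => (n !⁻¹ : ℝ) * ℓ (x ^ n)) (ℓ (exp x)) := by
  simpa using (exp_series_hasSum_exp' (𝕂 := ℝ) x).mapL ℓ

theorem hasDerivAt_tracial_exp_add_smul (hτ : ∀ a b, τ (a * b) = τ (b * a)) (A B : 𝔸) (t₀ : ℝ) :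
    HasDerivAt (fun t : ℝ => τ (exp (A + t • B))) (τ (B * exp (A + t₀ • B))) t₀ := by
  set X : ℝ → 𝔸 := fun t => A + t • B
  have hX : ∀ t, HasDerivAt X B t := fun t =>
    ((hasDerivAt_id t).smul_const B).const_add A |>.congr_deriv (one_smul _ _)
  -- Without the term `τ 1`, `g' n` is the `n`-th term of the series of `τ (B * exp (X t))`.
  set g : ℕ → ℝ → ℝ := fun n t => ((n + 1) !⁻¹ : ℝ) * τ (X t ^ (n + 1))
  set g' : ℕ → ℝ → ℝ := fun n t => (n !⁻¹ : ℝ) * τ (B * X t ^ n)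
  have hg : ∀ n t, HasDerivAt (g n) (g' n t) t := fun n t => by
    refine ((hX t).tracial_pow hτ (n + 1)).const_mul _ |>.congr_deriv ?_
    simp only [g', Nat.add_sub_cancel, Nat.factorial_succ, Nat.cast_mul, Nat.cast_add_one]
    field_simp
  set C := ‖A‖ + (|t₀| + 1) * ‖B‖
  have hg'_le : ∀ n, ∀ t ∈ Metric.ball t₀ 1, ‖g' n t‖ ≤ ‖τ‖ * ‖B‖ * (C ^ n / n !) := by
    intro n t ht
    have hXt : ‖X t‖ ≤ C := norm_add_smul_le_of_mem_ball A B ht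
    calc ‖g' n t‖ = (n !⁻¹ : ℝ) * ‖τ (B * X t ^ n)‖ := by simp [g']
      _ ≤ (n !⁻¹ : ℝ) * (‖τ‖ * (‖B‖ * C ^ n)) := by
        gcongr
        exact (τ.le_opNorm _).trans (by gcongr; exact (norm_mul_pow_le _ _ _).trans (by gcongr))
      _ = ‖τ‖ * ‖B‖ * (C ^ n / n !) := by ring
  have hsum : ∀ t, HasSum (fun n => g n t) (τ (exp (X t)) - τ 1) := fun t => by
    simpa [g] using (hasSum_nat_add_iff' 1).mpr (hasSum_exp_series_apply τ (X t))
  have hsum' : HasSum (fun n => g' n t₀) (τ (B * exp (X t₀))) := by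
    simpa [g'] using hasSum_exp_series_apply (τ.comp (ContinuousLinearMap.mul ℝ 𝔸 B)) (X t₀)
  have hderiv := hasDerivAt_tsum_of_isPreconnected
    ((Real.summable_pow_div_factorial C).mul_left (‖τ‖ * ‖B‖)) Metric.isOpen_ball
    (convex_ball t₀ 1).isPreconnected (fun n t _ => hg n t) hg'_le (Metric.mem_ball_self one_pos)
    (hsum t₀).summable (Metric.mem_ball_self one_pos)
  rw [hsum'.tsum_eq] at hderiv
  have hfun : (fun t => τ (exp (X t))) = fun t => τ 1 + ∑' n, g n t := by
    funext t
    rw [(hsum t).tsum_eq]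
    ring
  rw [hfun]
  exact hderiv.const_add (τ 1)

end Tracial

namespace Matrix

noncomputable def reTraceCLM (n : Type*) [Fintype n] : Matrix n n ℂ →L[ℝ] ℝ :=
  Complex.reCLM.comp ((traceLinearMap n ℂ ℂ).restrictScalars ℝ).toContinuousLinearMap

variable {n : Type*} [Fintype n]

theorem hasDerivAt_re_trace_exp_add_smul [DecidableEq n] (A B : Matrix n n ℂ) (t₀ : ℝ) :
    HasDerivAt (fun t : ℝ => (NormedSpace.exp (A + t • B)).trace.re)
      ((B * NormedSpace.exp (A + t₀ • B)).trace.re) t₀ := by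
  let _ := Matrix.linftyOpNormedRing (n := n) (α := ℂ)
  let _ := Matrix.linftyOpNormedAlgebra (n := n) (R := ℝ) (α := ℂ)
  exact hasDerivAt_tracial_exp_add_smul (τ := reTraceCLM n)
    (fun a b => congrArg Complex.re (trace_mul_comm a b)) A B t₀

theorem IsHermitian.re_trace_exp_pos_s14 [Nonempty n] [DecidableEq n] {A : Matrix n n ℂ}
    (hA : A.IsHermitian) : 0 < (NormedSpace.exp A).trace.re := by
  set B := NormedSpace.exp ((2⁻¹ : ℝ) • A)
  have hB : B.IsHermitian := (hA.smul (IsSelfAdjoint.all _)).exp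
  have hexp : NormedSpace.exp A = Bᴴ * B := by
    rw [hB.eq, ← exp_add_of_commute _ _ (Commute.refl _), ← add_smul]
    norm_num
  have hpos : (Bᴴ * B).PosDef :=
    PosDef.conjTranspose_mul_self B (mulVec_injective_iff_isUnit.mpr (isUnit_exp _))
  rw [hexp]
  exact (Complex.pos_iff.mp hpos.trace_pos).1

end Matrix

/-- First derivative of the log-partition function: `φ'(α) = tr(G·σ_α)` where
`σ_α = exp(H + αG)/tr exp(H + αG)` is the Gibbs state. -/
theorem logpartition_deriv [NeZero d]
    (H G : Matrix (Fin d) (Fin d) ℂ) (hH : H.IsHermitian) (hG : G.IsHermitian)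
    (φ : ℝ → ℝ)
    (hφ : ∀ a : ℝ, φ a = Real.log ((NormedSpace.exp (H + a • G)).trace.re)) :
    (∀ α : ℝ, DifferentiableAt ℝ φ α) ∧
      ∀ α : ℝ,
        deriv φ α =
          ((G * NormedSpace.exp (H + α • G)).trace.re) /
            ((NormedSpace.exp (H + α • G)).trace.re) := by
  have hderiv : ∀ α : ℝ, HasDerivAt φ
      ((G * exp (H + α • G)).trace.re / (exp (H + α • G)).trace.re) α := fun α => by
    rw [funext hφ]
    exact (Matrix.hasDerivAt_re_trace_exp_add_smul H G α).log
      (hH.add (hG.smul (IsSelfAdjoint.all α))).re_trace_exp_pos_s14.ne'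
  exact ⟨fun α => (hderiv α).differentiableAt, fun α => (hderiv α).deriv⟩
end
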